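/- arXiv:1609.01429 — 4 statements merged into one kernel-verified Lean document; each statement's English description precedes it below -/
import Mathlib

section
/- Let ν be any multiplicative character on F_q, so that φν⁴ is an odd character. Then Σ_{j∈F_q*} (φν⁴)(j)V(j) = ν̄(a)·τ⁻¹·G₂(νN·M₈) + (φν̄)(a)·τ⁻¹·G₂(νN·M₈⁵). -/
open Finset
open scoped BigOperators Classical

/-!
For `j ≠ 0` the substitution `w = j² z` turns `V j` into a sum over the norm fibre
`N w = j⁴ a`, because `M₈` is trivial on squares of `F_q*` (`gcd(8, q - 1) = 2`). Summing over
`j` then counts the fourth roots of `N w / a`; since `-1` is a non-square in `F_q`, there are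
`1 + φ(N w / a)` of them. Finally `M₈⁴` and `φ ∘ N` are both the unique character of order two
of the cyclic group `F_{q²}*`, so `φ(N w) M₈(w) = M₈⁵(w)`, which produces the second Gauss sum.
-/

namespace MulChar

section Cyclic

variable {M R : Type*} [CommMonoid M] [CommRing R] [IsDomain R]

lemma apply_generator_eq_neg_one {g : Mˣ} (hg : ∀ x, x ∈ Subgroup.zpowers g)
    {χ : MulChar M R} (hsq : χ ^ 2 = 1) (hne : χ ≠ 1) : χ g = -1 := by
  have h : χ g * χ g = 1 := by rw [← sq, ← pow_apply_coe, hsq, one_apply_coe]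
  refine (mul_self_eq_one_iff.mp h).resolve_left fun h1 ↦ hne ?_
  refine equivToUnitHom.injective ((MonoidHom.eq_iff_eq_on_generator hg _ _).mpr ?_)
  ext
  simp [h1]

lemma eq_of_sq_eq_one [IsCyclic Mˣ] {χ χ' : MulChar M R} (hχ : χ ^ 2 = 1) (hχ' : χ' ^ 2 = 1)
    (hχ₁ : χ ≠ 1) (hχ'₁ : χ' ≠ 1) : χ = χ' := by
  obtain ⟨g, hg⟩ := IsCyclic.exists_generator (α := Mˣ)
  refine equivToUnitHom.injective ((MonoidHom.eq_iff_eq_on_generator hg _ _).mpr ?_)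
  ext
  simp [apply_generator_eq_neg_one hg hχ hχ₁, apply_generator_eq_neg_one hg hχ' hχ'₁]

end Cyclic

section Norm

variable {F : Type*} (K : Type*) {R : Type*} [Field F] [Field K] [Algebra F K]
  [FiniteDimensional F K]

noncomputable def compNorm [CommMonoidWithZero R] : MulChar F R →* MulChar K R where
  toFun χ :=
    { toFun w := χ (Algebra.norm F w)
      map_one' := by simp
      map_mul' x y := by simp
      map_nonunit' w hw := by simp [not_not.mp (mt isUnit_iff_ne_zero.mpr hw)] }
  map_one' := by
    ext u
    simpa using one_apply (R' := R) (u.isUnit.map (Algebra.norm F))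
  map_mul' χ χ' := by
    ext u
    simp

@[simp]
lemma compNorm_apply [CommMonoidWithZero R] (χ : MulChar F R) (w : K) :
    compNorm K χ w = χ (Algebra.norm F w) :=
  rfl

lemma compNorm_injective [Finite K] [CommMonoidWithZero R] :
    Function.Injective (compNorm K : MulChar F R →* MulChar K R) := by
  intro χ χ' h
  ext u
  obtain ⟨w, hw⟩ := FiniteField.norm_surjective F K u
  rw [← hw, ← compNorm_apply, h, compNorm_apply]

lemma pow_four_eq_compNorm [Finite K] [CommRing R] [IsDomain R] {χ : MulChar K R}
    (hχ : orderOf χ = 8) {φ : MulChar F R} (hφ : φ ^ 2 = 1) (hφ₁ : φ ≠ 1) :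
    χ ^ 4 = compNorm K φ :=
  eq_of_sq_eq_one (by rw [← pow_mul, ← pow_orderOf_eq_one χ, hχ])
    (by rw [← map_pow, hφ, map_one])
    (pow_ne_one_of_lt_orderOf (by norm_num) (by omega))
    ((map_ne_one_iff _ (compNorm_injective K)).mpr hφ₁)

end Norm

lemma pow_five_apply_of_orderOf_eq_eight {F K R : Type*} [Field F] [Fintype F] [Field K]
    [Finite K] [Algebra F K] [CommRing R] [IsDomain R] [CharZero R] (hF : ringChar F ≠ 2)
    {χ : MulChar K R}
    (hχ : orderOf χ = 8) (w : K) : (χ ^ 5) w = quadraticChar F (Algebra.norm F w) * χ w := by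
  rw [pow_succ, mul_apply, pow_four_eq_compNorm K hχ
    ((quadraticChar_isQuadratic F).comp (Int.castRingHom R)).sq_eq_one
    ((ringHomComp_ne_one_iff Int.cast_injective).mpr (quadraticChar_ne_one hF))]
  rfl

end MulChar

lemma sq_eq_one_of_pow_eight_eq_one {M : Type*} [Monoid M] {x : M} {n : ℕ} (hn : n % 4 = 2)
    (h8 : x ^ 8 = 1) (hn1 : x ^ n = 1) : x ^ 2 = 1 := by
  have hgcd : Nat.gcd 8 n = 2 := by
    rw [Nat.gcd_rec]
    rcases (by omega : n % 8 = 2 ∨ n % 8 = 6) with h | h <;> rw [h] <;> rfl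
  rw [← hgcd]
  exact pow_gcd_eq_one.mpr ⟨h8, hn1⟩

lemma MulChar.apply_algebraMap_sq_eq_one {F K R : Type*} [Field F] [Fintype F] [Field K]
    [Algebra F K] [CommMonoidWithZero R] (hF : Fintype.card F % 4 = 3) {χ : MulChar K R}
    (hχ : χ ^ 8 = 1) {j : F} (hj : j ≠ 0) : χ (algebraMap F K (j ^ 2)) = 1 := by
  have hunit : IsUnit (algebraMap F K j) := (Ne.isUnit hj).map _
  rw [map_pow, map_pow]
  refine sq_eq_one_of_pow_eight_eq_one (n := Fintype.card F - 1) (by omega) ?_ ?_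
  · rw [← pow_apply' χ (by norm_num), hχ, one_apply hunit]
  · rw [← map_pow, ← map_pow, FiniteField.pow_card_sub_one_eq_one j hj, map_one, map_one]

lemma FiniteField.card_filter_pow_four_eq {F : Type*} [Field F] [Fintype F]
    (hF : Fintype.card F % 4 = 3) (c : F) :
    (#{j | j ^ 4 = c} : ℤ) = quadraticChar F c + 1 := by
  have hF2 : ringChar F ≠ 2 := FiniteField.even_card_iff_char_two.not.mpr (by omega)
  have hsqrts (b : F) : (#{j | j ^ 2 = b} : ℤ) = quadraticChar F b + 1 := by
    simpa [Set.toFinset_ofPred] using quadraticChar_card_sqrts hF2 b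
  -- `-1` is a non-square, so the square roots of `c` cancel in pairs `± u`.
  have hneg (u : F) : quadraticChar F (-u) = -quadraticChar F u := by
    rw [neg_eq_neg_one_mul, map_mul, quadraticChar_neg_one_iff_not_isSquare.mpr
      (by rw [FiniteField.isSquare_neg_one_iff]; omega), neg_one_mul]
  have hodd : ∑ u ∈ ({u | u ^ 2 = c} : Finset F), quadraticChar F u = 0 := by
    have h := sum_equiv (Equiv.neg F) (s := {u | u ^ 2 = c}) (t := {u | u ^ 2 = c})
      (f := fun u ↦ quadraticChar F u) (g := fun u ↦ -quadraticChar F u) (by simp)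
      (by simp [hneg])
    rw [sum_neg_distrib] at h
    omega
  have hfiber (u : F) (hu : u ∈ ({u | u ^ 2 = c} : Finset F)) :
      ({j | j ^ 4 = c} : Finset F).filter (· ^ 2 = u) = ({j | j ^ 2 = u} : Finset F) := by
    ext j
    simp only [mem_filter, mem_univ, true_and] at hu ⊢
    exact ⟨And.right, fun hj ↦ ⟨by rw [show 4 = 2 * 2 from rfl, pow_mul, hj, hu], hj⟩⟩
  rw [card_eq_sum_card_fiberwise (f := (· ^ 2)) (t := {u | u ^ 2 = c})
    (by intro j hj; simpa [← pow_mul] using hj)]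
  push_cast
  rw [sum_congr rfl fun u hu ↦ by rw [hfiber u hu, hsqrts u], sum_add_distrib, hodd, zero_add,
    ← hsqrts c]
  simp

lemma FiniteField.card_filter_eq_pow_four_mul {F : Type*} [Field F] [Fintype F]
    (hF : Fintype.card F % 4 = 3) {a : F} (ha : a ≠ 0) (c : F) :
    (#{j | c = j ^ 4 * a} : ℤ) = quadraticChar F (a * c) + 1 := by
  have hroots : ({j | c = j ^ 4 * a} : Finset F) = ({j | j ^ 4 = c * a⁻¹} : Finset F) := by
    ext j
    simp [eq_mul_inv_iff_mul_eq₀ ha, eq_comm]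
  rw [hroots, card_filter_pow_four_eq hF, map_mul, map_mul, ← MulChar.inv_apply',
    (quadraticChar_isQuadratic F).inv, mul_comm]

lemma sum_filter_norm_eq_comp_algebraMap_mul {F K M : Type*} [Field F] [Field K] [Fintype K]
    [Algebra F K] [AddCommMonoid M] (f : K → M) {c : F} (hc : c ≠ 0) (a : F) :
    ∑ z ∈ {z : K | Algebra.norm F z = a}, f (algebraMap F K c * z) =
      ∑ w ∈ {w : K | Algebra.norm F w = c ^ Module.finrank F K * a}, f w := by
  have hc' : algebraMap F K c ≠ 0 := by simpa using hc
  rw [sum_filter, sum_filter]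
  refine Fintype.sum_equiv (Equiv.mulLeft₀ _ hc') _ _ fun z ↦ ?_
  simp [Algebra.norm_algebraMap, hc]

lemma sum_filter_norm_mul_algebraMap_sq {F K R : Type*} [Field F] [Fintype F] [Field K]
    [Fintype K] [Algebra F K] [CommRing R] (hF : Fintype.card F % 4 = 3)
    (hK : Module.finrank F K = 2) {χ : MulChar K R} (hχ : χ ^ 8 = 1) (ν : MulChar F R)
    (g : K → R) {j : F} (hj : j ≠ 0) (a : F) :
    ν j ^ 4 * ν a *
        ∑ z ∈ {z : K | Algebra.norm F z = a}, χ z * g (algebraMap F K (j ^ 2) * z) =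
      ∑ w ∈ {w : K | Algebra.norm F w = j ^ 4 * a}, ν (Algebra.norm F w) * χ w * g w := by
  have hsub := sum_filter_norm_eq_comp_algebraMap_mul
    (fun w ↦ ν (Algebra.norm F w) * χ w * g w) (pow_ne_zero 2 hj) a
  rw [hK, ← pow_mul] at hsub
  rw [← hsub, mul_sum]
  refine sum_congr rfl fun z hz ↦ ?_
  rw [map_mul χ, χ.apply_algebraMap_sq_eq_one hF hχ hj, map_mul, Algebra.norm_algebraMap, hK,
    (mem_filter.mp hz).2, map_mul, map_pow ν, map_pow ν]
  ring

lemma mul_sum_filter_norm_mul_algebraMap_sq {F K R : Type*} [Field F] [Fintype F] [Field K]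
    [Fintype K] [Algebra F K] [CommRing R] (hF : Fintype.card F % 4 = 3)
    (hK : Module.finrank F K = 2) {χ : MulChar K R} (hχ : χ ^ 8 = 1) {φ : MulChar F R}
    (hφ : φ.IsQuadratic) (ν : MulChar F R) (g : K → R) {j : F} (hj : j ≠ 0) {a : F}
    (ha : a ≠ 0) :
    (φ * ν ^ 4) j * φ j *
        ∑ z ∈ {z : K | Algebra.norm F z = a}, χ z * g (algebraMap F K (j ^ 2) * z) =
      ν⁻¹ a * ∑ w ∈ {w : K | Algebra.norm F w = j ^ 4 * a}, ν (Algebra.norm F w) * χ w * g w := by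
  have hφj : φ j ^ 2 = 1 := by
    rw [← MulChar.pow_apply' _ two_ne_zero, hφ.sq_eq_one, MulChar.one_apply hj.isUnit]
  have hνa : ν⁻¹ a * ν a = 1 := by
    rw [← MulChar.mul_apply, MulChar.inv_mul, MulChar.one_apply ha.isUnit]
  rw [← sum_filter_norm_mul_algebraMap_sq hF hK hχ ν g hj a, MulChar.mul_apply,
    MulChar.pow_apply' _ four_ne_zero]
  linear_combination (ν j ^ 4 * ∑ z ∈ {z : K | Algebra.norm F z = a},
    χ z * g (algebraMap F K (j ^ 2) * z)) * (hφj - hνa)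

lemma Module.finrank_eq_of_card_eq_pow {F V : Type*} [Field F] [Fintype F] [AddCommGroup V]
    [Module F V] [Fintype V] {n : ℕ} (h : Fintype.card V = Fintype.card F ^ n) :
    Module.finrank F V = n :=
  Nat.pow_right_injective Fintype.one_lt_card (Module.card_eq_pow_finrank.symm.trans h)

lemma sum_sum_filter_eq_sum_card_smul {ι κ M : Type*} [Fintype κ] [AddCommMonoid M]
    (s : Finset ι) (P : ι → κ → Prop) (h : κ → M) :
    ∑ j ∈ s, ∑ w ∈ {w | P j w}, h w = ∑ w, #{j ∈ s | P j w} • h w := by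
  rw [sum_comm' (t' := univ) (s' := fun w ↦ {j ∈ s | P j w}) (by simp)]
  simp_rw [sum_const]

theorem statement1_general
    (q : ℕ)
    (hq3 : q % 4 = 3)
    (F K : Type) [Field F] [Fintype F] [Field K] [Fintype K] [Algebra F K]
    (hF : Fintype.card F = q) (hK : Fintype.card K = q ^ 2)
    (ψ : F → ℂ)
    (φ : MulChar F ℂ) (hφ : ∀ x : F, φ x = ((quadraticChar F x : ℤ) : ℂ))
    (M₈ : MulChar K ℂ) (hM₈ : orderOf M₈ = 8)
    (a : F) (ha : a ≠ 0)
    (τ : ℂ)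
    (V : F → ℂ)
    (hV : ∀ j : F, V j = τ⁻¹ * φ j *
      ∑ z ∈ Finset.univ.filter (fun z : K => Algebra.norm F z = a),
        M₈ z * ψ (Algebra.trace F K (algebraMap F K (j ^ 2) * z)))
    (ν : MulChar F ℂ) :
    ∑ j ∈ (Finset.univ : Finset F) \ {0}, (φ * ν ^ 4) j * V j =
      ν⁻¹ a * τ⁻¹ * (∑ z : K, ν (Algebra.norm F z) * M₈ z * ψ (Algebra.trace F K z)) +
      (φ * ν⁻¹) a * τ⁻¹ *
        (∑ z : K, ν (Algebra.norm F z) * (M₈ ^ 5) z * ψ (Algebra.trace F K z)) := by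
  have hF4 : Fintype.card F % 4 = 3 := hF ▸ hq3
  have hφquad : φ.IsQuadratic := fun x ↦ by
    rcases quadraticChar_isQuadratic F x with h | h | h <;> simp [hφ, h]
  have hM₈₅ (w : K) : (M₈ ^ 5) w = φ (Algebra.norm F w) * M₈ w := by
    rw [hφ, MulChar.pow_five_apply_of_orderOf_eq_eight
      ((FiniteField.even_card_iff_char_two (F := F)).not.mpr (by omega)) hM₈]
  set h : K → ℂ := fun w ↦ ν (Algebra.norm F w) * M₈ w * ψ (Algebra.trace F K w) with hh
  set S : F → ℂ := fun j ↦ ∑ w ∈ {w : K | Algebra.norm F w = j ^ 4 * a}, h w with hS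
  have hterm (j : F) (hj : j ≠ 0) : (φ * ν ^ 4) j * V j = τ⁻¹ * ν⁻¹ a * S j := by
    have key := mul_sum_filter_norm_mul_algebraMap_sq hF4
      (Module.finrank_eq_of_card_eq_pow (by rw [hK, hF])) (hM₈ ▸ pow_orderOf_eq_one M₈) hφquad ν
      (fun w ↦ ψ (Algebra.trace F K w)) hj ha
    rw [hV]
    convert congrArg (τ⁻¹ * ·) key using 1 <;> ring
  have hS₀ : S 0 = 0 := sum_eq_zero fun w hw ↦ by
    simp [hh, (mem_filter.mp hw).2, MulChar.map_zero]
  calc ∑ j ∈ univ \ {0}, (φ * ν ^ 4) j * V j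
      = τ⁻¹ * ν⁻¹ a * ∑ j, S j := by
        rw [sum_congr rfl fun j hj ↦ hterm j (by simpa using hj), ← mul_sum,
          sum_subset (subset_univ _) fun j _ hj ↦ by simp_all]
    _ = τ⁻¹ * ν⁻¹ a * ∑ w, (1 + φ a * φ (Algebra.norm F w)) * h w := by
        rw [hS, sum_sum_filter_eq_sum_card_smul]
        refine congrArg _ (sum_congr rfl fun w _ ↦ ?_)
        rw [nsmul_eq_mul, ← Int.cast_natCast, FiniteField.card_filter_eq_pow_four_mul hF4 ha,
          Int.cast_add, ← hφ, map_mul, Int.cast_one, add_comm]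
    _ = _ := by
        simp only [hh, hM₈₅, MulChar.mul_apply, mul_sum, ← sum_add_distrib]
        exact sum_congr rfl fun w _ ↦ by ring

/-- For any multiplicative character ν on F_q (q ≡ 3 mod 4), so that φν⁴ is odd,
Σ_{j∈F_q*} (φν⁴)(j) V(j) = ν̄(a)·τ⁻¹·G₂(νN·M₈) + (φν̄)(a)·τ⁻¹·G₂(νN·M₈⁵). -/
theorem statement1
    (p n q : ℕ) [Fact p.Prime] (hpodd : Odd p) (hn : 0 < n) (hq : q = p ^ n)
    (hq3 : q % 4 = 3)
    (F K : Type) [Field F] [Fintype F] [Field K] [Fintype K] [Algebra F K]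
    (hF : Fintype.card F = q) (hK : Fintype.card K = q ^ 2)
    [Algebra (ZMod p) F]
    (ψ : F → ℂ)
    (hψ : ∀ y : F, ψ y =
      Complex.exp (2 * Real.pi * Complex.I * ((Algebra.trace (ZMod p) F y).val : ℂ) / p))
    (φ : MulChar F ℂ) (hφ : ∀ x : F, φ x = ((quadraticChar F x : ℤ) : ℂ))
    (M₈ : MulChar K ℂ) (hM₈ : orderOf M₈ = 8)
    (a : F) (ha : a ≠ 0)
    (τ : ℂ) (hτ : τ ^ 2 = (q : ℂ) * M₈ (algebraMap F K (-a)))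
    (V : F → ℂ)
    (hV : ∀ j : F, V j = τ⁻¹ * φ j *
      ∑ z ∈ Finset.univ.filter (fun z : K => Algebra.norm F z = a),
        M₈ z * ψ (Algebra.trace F K (algebraMap F K (j ^ 2) * z)))
    (ν : MulChar F ℂ) :
    ∑ j ∈ (Finset.univ : Finset F) \ {0}, (φ * ν ^ 4) j * V j =
      ν⁻¹ a * τ⁻¹ * (∑ z : K, ν (Algebra.norm F z) * M₈ z * ψ (Algebra.trace F K z)) +
      (φ * ν⁻¹) a * τ⁻¹ *
        (∑ z : K, ν (Algebra.norm F z) * (M₈ ^ 5) z * ψ (Algebra.trace F K z)) :=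
  statement1_general q hq3 F K hF hK ψ φ hφ M₈ hM₈ a ha τ V hV ν
end

section
/- For any multiplicative character D on F_q and j ∈ {1, −1} ⊂ F_q*, h(D,j) = −φ(j)·D̄(16)·J(D, φ). -/
/-! For `j = -1` the last factor of each summand is the constant `(φD̄²)(4) = D̄(16)`, so
`h(D,-1) = D̄(16) J(D,φ)`. For `j = 1` it is `(φD̄²)(4x)`, which turns the sum into
`D̄(16) J(φD̄,φ)`. The substitution `x ↦ x⁻¹` gives `J(χ,ψ) = ψ(-1) J((χψ)⁻¹,ψ)`, hence
`J(φD̄,φ) = φ(-1) J(D,φ)` for quadratic `φ`, and `φ(-1) = -1` because `q ≡ 3 (mod 4)`. -/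

open Finset
open scoped BigOperators Classical

/-- The sum h(D,j) = Σ_{x∈F_q*} D(x)·φ(1−x)·(φD̄²)(x(j+1)² + (j−1)²). -/
noncomputable def hKatz {F : Type} [Field F] [Fintype F] (φ D : MulChar F ℂ) (j : F) : ℂ :=
  ∑ x ∈ (Finset.univ : Finset F) \ {0},
    D x * φ (1 - x) * (φ * (D⁻¹) ^ 2) (x * (j + 1) ^ 2 + (j - 1) ^ 2)

section JacobiSum

variable {F R : Type*} [Field F] [Fintype F] [CommRing R]

theorem jacobiSum_eq_apply_neg_one_mul_jacobiSum_mul_inv (χ ψ : MulChar F R) :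
    jacobiSum χ ψ = ψ (-1) * jacobiSum (χ * ψ)⁻¹ ψ := by
  rw [jacobiSum, ← Equiv.sum_comp (Equiv.inv F), jacobiSum, mul_sum]
  refine sum_congr rfl fun x _ ↦ ?_
  rcases eq_or_ne x 0 with rfl | hx
  · rw [Equiv.inv_apply, inv_zero, χ.map_zero, MulChar.map_zero, zero_mul, mul_zero]
  have h : 1 - x⁻¹ = -1 * (1 - x) * x⁻¹ := by field_simp; ring
  rw [Equiv.inv_apply, h, map_mul, map_mul, MulChar.inv_apply', MulChar.mul_apply]
  ring

theorem MulChar.IsQuadratic.jacobiSum_mul_inv {χ ψ : MulChar F R} (hψ : ψ.IsQuadratic) :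
    jacobiSum (ψ * χ⁻¹) ψ = ψ (-1) * jacobiSum χ ψ := by
  have hψ2 : ψ (-1) * ψ (-1) = 1 := by rw [← map_mul, neg_one_mul, neg_neg, map_one]
  rw [jacobiSum_eq_apply_neg_one_mul_jacobiSum_mul_inv χ, mul_inv, hψ.inv, mul_comm χ⁻¹,
    ← mul_assoc, hψ2, one_mul]

end JacobiSum

section hKatz

variable {F : Type} [Field F] [Fintype F] (φ D : MulChar F ℂ)

theorem hKatz_eq_sum_univ (j : F) :
    hKatz φ D j = ∑ x, D x * φ (1 - x) * (φ * D⁻¹ ^ 2) (x * (j + 1) ^ 2 + (j - 1) ^ 2) := by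
  rw [hKatz, sum_sdiff_eq_sub (subset_univ _), sum_singleton, D.map_zero, zero_mul, zero_mul,
    sub_zero]

theorem hKatz_neg_one : hKatz φ D (-1) = (φ * D⁻¹ ^ 2) 4 * jacobiSum D φ := by
  rw [hKatz_eq_sum_univ, jacobiSum, mul_sum]
  refine sum_congr rfl fun x _ ↦ ?_
  rw [show x * (-1 + 1) ^ 2 + (-1 - 1) ^ 2 = (4 : F) by ring]
  ring

theorem hKatz_one : hKatz φ D 1 = (φ * D⁻¹ ^ 2) 4 * jacobiSum (φ * D⁻¹) φ := by
  have hD_mul : D * (φ * D⁻¹ ^ 2) = φ * D⁻¹ := by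
    rw [pow_two, mul_left_comm, mul_inv_cancel_left]
  rw [hKatz_eq_sum_univ, jacobiSum, mul_sum]
  refine sum_congr rfl fun x _ ↦ ?_
  rw [show x * (1 + 1) ^ 2 + (1 - 1) ^ 2 = 4 * x by ring, map_mul, ← hD_mul, MulChar.mul_apply D]
  ring

end hKatz

theorem statement6_general
    (q : ℕ)
    (hq3 : q % 4 = 3)
    (F : Type) [Field F] [Fintype F] (hF : Fintype.card F = q)
    (φ : MulChar F ℂ) (hφ : ∀ x : F, φ x = ((quadraticChar F x : ℤ) : ℂ))
    (D : MulChar F ℂ) (j : F) (hj : j = 1 ∨ j = -1) :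
    hKatz φ D j = -φ j * D⁻¹ (16 : F) * ∑ y : F, D y * φ (1 - y) := by
  have hchar : ringChar F ≠ 2 := by
    rw [Ne, FiniteField.even_card_iff_char_two, hF]
    omega
  have hφ_quadratic : φ.IsQuadratic := fun a ↦ by
    rcases quadraticChar_isQuadratic F a with h | h | h <;> simp [hφ, h]
  have hφ_neg_one : φ (-1) = -1 := by
    rw [hφ, quadraticChar_neg_one hchar, hF, ZMod.χ₄_nat_three_mod_four hq3, Int.cast_neg,
      Int.cast_one]
  have hφ_four : φ 4 = 1 := by
    rw [show (4 : F) = 2 ^ 2 by norm_num, hφ, quadraticChar_sq_one' (Ring.two_ne_zero hchar),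
      Int.cast_one]
  have h_four : (φ * D⁻¹ ^ 2) 4 = D⁻¹ 16 := by
    rw [MulChar.mul_apply, MulChar.pow_apply' _ two_ne_zero, hφ_four, one_mul, ← map_pow]
    norm_num
  change _ = _ * jacobiSum D φ
  rcases hj with rfl | rfl
  · rw [hKatz_one, hφ_quadratic.jacobiSum_mul_inv, h_four, hφ_neg_one, map_one]
    ring
  · rw [hKatz_neg_one, h_four, hφ_neg_one]
    ring

/-- For any multiplicative character D on F_q (q ≡ 3 mod 4) and j ∈ {1,−1},
h(D,j) = −φ(j)·D̄(16)·J(D,φ). -/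
theorem statement6
    (p n q : ℕ) [Fact p.Prime] (hpodd : Odd p) (hn : 0 < n) (hq : q = p ^ n)
    (hq3 : q % 4 = 3)
    (F : Type) [Field F] [Fintype F] (hF : Fintype.card F = q)
    (φ : MulChar F ℂ) (hφ : ∀ x : F, φ x = ((quadraticChar F x : ℤ) : ℂ))
    (D : MulChar F ℂ) (j : F) (hj : j = 1 ∨ j = -1) :
    hKatz φ D j = -φ j * D⁻¹ (16 : F) * ∑ y : F, D y * φ (1 - y) :=
  statement6_general q hq3 F hF φ hφ D j hj
end

section
/- For j ∈ F_q* with j² ≠ 1, h(ε,j) = 0, i.e. Σ_{x∈F_q*} φ(1−x)·φ(x(j+1)² + (j−1)²) = 0. -/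
/-!
Substituting `x = v + (u - v) t` turns `∑ₓ χ(u - x) χ⁻¹(x - v)` into the Jacobi sum `J(χ⁻¹, χ)`,
which equals `-χ(-1)` for nontrivial `χ`. For the quadratic character `φ` (so `φ⁻¹ = φ`) this
gives `∑ₓ φ(1 - x) φ(x(j+1)² + (j-1)²) = -φ(-1) φ((j+1)²) = 1` over all of `F`, because
`φ(-1) = -1` when `q ≡ 3 (mod 4)`; the excluded term `x = 0` is `φ((j-1)²) = 1`.
The hypothesis `(j+1)² + (j-1)² ≠ 0` needed for the substitution holds because otherwise
`-1` would be the square of `(j+1)/(j-1)`.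
-/

open Finset
open scoped BigOperators Classical

namespace MulChar

theorem isQuadratic_of_apply_eq_quadraticChar {F R : Type*} [Field F] [Fintype F]
    [CommRing R] {φ : MulChar F R} (hφ : ∀ x, φ x = quadraticChar F x) : φ.IsQuadratic := by
  intro a
  rcases quadraticChar_isQuadratic F a with h | h | h <;> simp [hφ, h]

variable {F R : Type*} [Field F] [Fintype F] [CommRing R] [IsDomain R]

theorem sum_apply_sub_mul_inv_apply_sub {χ : MulChar F R} (hχ : χ ≠ 1) {u v : F} (huv : u ≠ v) :
    ∑ x, χ (u - x) * χ⁻¹ (x - v) = -χ (-1) := by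
  have hw : u - v ≠ 0 := sub_ne_zero.mpr huv
  have hunit : χ (u - v) * χ⁻¹ (u - v) = 1 := by
    rw [← mul_apply, mul_inv_cancel, one_apply hw.isUnit]
  have hbij : Function.Bijective fun t : F ↦ v + (u - v) * t :=
    (AddGroup.addLeft_bijective v).comp (mulLeft_bijective₀ _ hw)
  rw [← jacobiSum_nontrivial_inv hχ, jacobiSum_comm, jacobiSum,
    ← Fintype.sum_bijective _ hbij _ _ fun _ ↦ rfl]
  refine Fintype.sum_congr _ _ fun t ↦ ?_
  rw [show u - (v + (u - v) * t) = (u - v) * (1 - t) by ring, add_sub_cancel_left, map_mul,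
    map_mul]
  linear_combination (χ (1 - t) * χ⁻¹ t) * hunit

theorem sum_apply_one_sub_mul_inv_apply_mul_add {χ : MulChar F R} (hχ : χ ≠ 1) {a b : F}
    (ha : a ≠ 0) (hab : a + b ≠ 0) :
    ∑ x, χ (1 - x) * χ⁻¹ (x * a + b) = -χ (-1) * χ⁻¹ a := by
  have h1 : (1 : F) ≠ -b / a := by
    rw [ne_eq, eq_div_iff ha]
    exact fun h ↦ hab (by linear_combination h)
  rw [← sum_apply_sub_mul_inv_apply_sub hχ h1, sum_mul]
  refine Fintype.sum_congr _ _ fun x ↦ ?_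
  rw [show x * a + b = a * (x - -b / a) by field_simp; ring, map_mul]
  ring

end MulChar

theorem statement8_general
    (q : ℕ)
    (hq3 : q % 4 = 3)
    (F : Type) [Field F] [Fintype F] (hF : Fintype.card F = q)
    (φ : MulChar F ℂ) (hφ : ∀ x : F, φ x = ((quadraticChar F x : ℤ) : ℂ))
    (j : F) (hj : j ^ 2 ≠ 1) :
    ∑ x ∈ (Finset.univ : Finset F) \ {0},
        φ (1 - x) * φ (x * (j + 1) ^ 2 + (j - 1) ^ 2) = 0 := by
  have hnsq : ¬IsSquare (-1 : F) := FiniteField.isSquare_neg_one_iff.not_left.mpr (hF ▸ hq3)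
  have hφ_neg_one : φ (-1) = -1 := by
    simp [hφ, quadraticChar_neg_one_iff_not_isSquare.mpr hnsq]
  have hφ_ne_one : φ ≠ 1 := fun h ↦ by
    have h1 := h ▸ hφ_neg_one
    norm_num [MulChar.one_apply isUnit_one.neg] at h1
  have hφ_sq {y : F} (hy : y ≠ 0) : φ (y ^ 2) = 1 := by simp [hφ, quadraticChar_sq_one' hy]
  have hj_sub : j - 1 ≠ 0 := fun h ↦ hj (by rw [sub_eq_zero.mp h, one_pow])
  have hj_add : j + 1 ≠ 0 := fun h ↦ hj (by rw [eq_neg_of_add_eq_zero_left h]; norm_num)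
  have hj_sum : (j + 1) ^ 2 + (j - 1) ^ 2 ≠ 0 := fun h ↦
    hnsq ⟨(j + 1) / (j - 1), by field_simp; linear_combination -h⟩
  have hfull := MulChar.sum_apply_one_sub_mul_inv_apply_mul_add hφ_ne_one (pow_ne_zero 2 hj_add)
    hj_sum
  rw [(MulChar.isQuadratic_of_apply_eq_quadraticChar (by exact_mod_cast hφ)).inv] at hfull
  rw [sum_sdiff_eq_sub (subset_univ _), hfull, sum_singleton, hφ_neg_one, hφ_sq hj_add]
  simp [hφ_sq hj_sub]

/-- For q ≡ 3 mod 4 and j ∈ F_q* with j² ≠ 1, h(ε,j) = 0, i.e.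
Σ_{x∈F_q*} φ(1−x)·φ(x(j+1)² + (j−1)²) = 0. -/
theorem statement8
    (p n q : ℕ) [Fact p.Prime] (hpodd : Odd p) (hn : 0 < n) (hq : q = p ^ n)
    (hq3 : q % 4 = 3)
    (F : Type) [Field F] [Fintype F] (hF : Fintype.card F = q)
    (φ : MulChar F ℂ) (hφ : ∀ x : F, φ x = ((quadraticChar F x : ℤ) : ℂ))
    (j : F) (hj0 : j ≠ 0) (hj : j ^ 2 ≠ 1) :
    ∑ x ∈ (Finset.univ : Finset F) \ {0},
        φ (1 - x) * φ (x * (j + 1) ^ 2 + (j - 1) ^ 2) = 0 :=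
  statement8_general q hq3 F hF φ hφ j hj
end

section
/- Let D be a nontrivial multiplicative character on F_q and ν₁ any multiplicative character on F_q. Then Σ_{j∈F_q*} ν₁⁴(j)·R(D,j) = J₂(ν₁N·M₈, D̄N) + J₂(ν₁N·M₈⁵, D̄N). -/
open Finset
open scoped Classical

/-!
Swapping the two sums, the coefficient of `M₈ z * D⁻¹ (N (1 - z))` becomes
`∑_{j ≠ 0, j⁴ = N z} ν₁⁴ j = ν₁ (N z) * #{j | j⁴ = N z}`. Counting fourth roots through their
squares, `#{j | j⁴ = a} = ∑_{x² = a} (1 + φ x) = 1 + φ a`: as `-1` is not a square in `F`, the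
square roots `±x` of `a` have opposite quadratic characters.
Euler's criterion together with `N z = z ^ ((q² - 1) / (q - 1))` gives `φ (N z) = ψ z` for the
quadratic character `ψ` of `K`, and `ψ = M₈ ^ 4`, since `ψ` is the only character of order two.
So the coefficient is `ν₁ (N z) * (1 + M₈ z ^ 4)`, which splits into the two Jacobi sums.
-/

theorem ringChar_ne_two_of_card_mod_four_eq_three {F : Type*} [Field F] [Fintype F]
    (hF : Fintype.card F % 4 = 3) : ringChar F ≠ 2 := fun h => by
  have := FiniteField.even_card_of_char_two h; omega

theorem quadraticChar_card_fourth_roots {F : Type*} [Field F] [Fintype F]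
    (hF : Fintype.card F % 4 = 3) (a : F) :
    (#{j : F | j ^ 4 = a} : ℤ) = quadraticChar F a + 1 := by
  have hF2 : ringChar F ≠ 2 := ringChar_ne_two_of_card_mod_four_eq_three hF
  have hneg : quadraticChar F (-1) = -1 :=
    quadraticChar_neg_one_iff_not_isSquare.mpr (by
      rw [FiniteField.isSquare_neg_one_iff, hF]; decide)
  have hfib : #{j : F | j ^ 4 = a} = ∑ x ∈ {x : F | x ^ 2 = a}, #{j : F | j ^ 2 = x} := by
    rw [card_eq_sum_card_fiberwise (f := (· ^ 2)) (t := {x : F | x ^ 2 = a})]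
    · refine sum_congr rfl fun x hx => congrArg card (ext fun j => ?_)
      rw [mem_filter_univ] at hx
      simp only [mem_filter, mem_univ, true_and, and_iff_right_iff_imp]
      intro hj; rw [← hx, ← hj]; ring
    · intro j hj
      simp only [coe_filter, mem_univ, true_and, Set.mem_ofPred_eq] at hj ⊢
      rw [← hj]; ring
  have hodd : ∑ x ∈ {x : F | x ^ 2 = a}, quadraticChar F x = 0 := by
    refine sum_involution (fun x _ => -x) (fun x _ => ?_) (fun x _ hx => ?_) (fun x hx => ?_)
      (fun x _ => neg_neg x)
    · rw [neg_eq_neg_one_mul, map_mul, hneg]; ring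
    · exact fun h => (quadraticChar_eq_zero_iff.not.mp hx)
        ((Ring.eq_self_iff_eq_zero_of_char_ne_two hF2).mp h)
    · simpa using hx
  have hsqrts (x : F) : (#{j : F | j ^ 2 = x} : ℤ) = quadraticChar F x + 1 := by
    simpa [Set.toFinset_ofPred] using quadraticChar_card_sqrts hF2 x
  rw [hfib, Nat.cast_sum]
  simp only [hsqrts, sum_add_distrib, hodd, sum_const, zero_add, nsmul_eq_mul, mul_one]

theorem MulChar.eq_quadraticChar_of_orderOf_eq_two {F R : Type*} [Field F] [Fintype F]
    [CommRing R] [IsDomain R] {χ : MulChar F R} (hχ : orderOf χ = 2) (a : F) :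
    χ a = quadraticChar F a := by
  have hsq : χ ^ 2 = 1 := hχ ▸ pow_orderOf_eq_one χ
  have hχsq (b : F) (hb : b ≠ 0) : χ (b * b) = 1 := by
    rw [map_mul, ← sq, ← MulChar.pow_apply' χ two_ne_zero, hsq,
      MulChar.one_apply (isUnit_iff_ne_zero.mpr hb)]
  rcases eq_or_ne a 0 with rfl | ha
  · simp
  by_cases hsa : IsSquare a
  · obtain ⟨b, rfl⟩ := hsa
    rw [hχsq b (left_ne_zero_of_mul ha), (quadraticChar_one_iff_isSquare ha).mpr ⟨b, rfl⟩,
      Int.cast_one]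
  · obtain ⟨u, hu⟩ : ∃ u : Fˣ, χ u ≠ 1 := by
      by_contra! h
      rw [MulChar.eq_one_iff.mpr h, orderOf_one] at hχ
      omega
    have hsu : ¬ IsSquare (u : F) := fun ⟨b, hb⟩ => hu (hb ▸ hχsq b (by rintro rfl; simp at hb))
    have hau : IsSquare (a * u) := by
      rw [← quadraticChar_one_iff_isSquare (mul_ne_zero ha u.ne_zero), map_mul,
        quadraticChar_neg_one_iff_not_isSquare.mpr hsa,
        quadraticChar_neg_one_iff_not_isSquare.mpr hsu]
      rfl
    obtain ⟨b, hb⟩ := hau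
    have hprod : χ a * χ u = 1 := by
      rw [← map_mul, hb, hχsq b (by rintro rfl; simp [ha] at hb)]
    have hu2 : χ u * χ u = 1 := by
      rw [← map_mul]; exact hχsq u u.ne_zero
    have hu' : χ u = -1 := by
      have : (χ u - 1) * (χ u + 1) = 0 := by linear_combination hu2
      rcases mul_eq_zero.mp this with h | h
      · exact absurd (sub_eq_zero.mp h) hu
      · exact eq_neg_of_add_eq_zero_left h
    rw [quadraticChar_neg_one_iff_not_isSquare.mpr hsa]
    push_cast
    linear_combination -hprod + (χ a) * hu'

theorem quadraticChar_norm {F K : Type*} [Field F] [Fintype F] [Field K] [Fintype K]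
    [Algebra F K] (hF : ringChar F ≠ 2) (z : K) :
    quadraticChar F (Algebra.norm F z) = quadraticChar K z := by
  have hK : ringChar K ≠ 2 := Algebra.ringChar_eq F K ▸ hF
  refine (quadraticChar_isQuadratic F).eq_of_eq_coe (quadraticChar_isQuadratic K) hK ?_
  have hexp : (Fintype.card K - 1) / (Fintype.card F - 1) * (Fintype.card F / 2) =
      Fintype.card K / 2 := by
    obtain ⟨m, hm⟩ : Fintype.card F - 1 ∣ Fintype.card K - 1 := by
      rw [Module.card_eq_pow_finrank (K := F) (V := K)]
      exact Nat.sub_one_dvd_pow_sub_one _ _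
    obtain ⟨k, hk⟩ := Nat.odd_iff.mpr (FiniteField.odd_card_of_char_ne_two hF)
    have hF1 : 1 < Fintype.card F := Fintype.one_lt_card
    have hK1 : 1 ≤ Fintype.card K := Fintype.card_pos
    generalize Fintype.card K = Q at hm hK1 ⊢
    rw [hk] at hm hF1 ⊢
    have hQ : Q = 2 * (k * m) + 1 := by
      rw [← Nat.sub_add_cancel hK1, hm, Nat.add_sub_cancel]; ring
    rw [hm, Nat.add_sub_cancel, Nat.mul_div_cancel_left _ (by omega), hQ,
      show (2 * k + 1) / 2 = k by omega, mul_comm]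
    omega
  calc ((quadraticChar F (Algebra.norm F z) : ℤ) : K)
      = algebraMap F K (quadraticChar F (Algebra.norm F z)) := (map_intCast _ _).symm
    _ = z ^ (Fintype.card K / 2) := by
      rw [quadraticChar_eq_pow_of_char_ne_two' hF, map_pow, FiniteField.algebraMap_norm_eq_pow,
        ← pow_mul, Nat.card_eq_fintype_card, Nat.card_eq_fintype_card, hexp]
    _ = quadraticChar K z := (quadraticChar_eq_pow_of_char_ne_two' hK z).symm

theorem MulChar.sum_pow_four_fourth_roots {F R : Type*} [Field F] [Fintype F] [CommRing R]
    [Nontrivial R] (hF : Fintype.card F % 4 = 3) (ν : MulChar F R) (a : F) :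
    ∑ j ∈ (univ \ {0}).filter (fun j : F => a = j ^ 4), (ν ^ 4) j =
      ν a * (quadraticChar F a + 1) := by
  calc ∑ j ∈ (univ \ {0}).filter (fun j : F => a = j ^ 4), (ν ^ 4) j
      = ∑ j ∈ {j : F | j ^ 4 = a}, (ν ^ 4) j := by
        refine sum_subset (fun j => by simp [eq_comm]) fun j hj hj' => ?_
        rw [mem_filter_univ] at hj
        obtain rfl : j = 0 := by simpa [hj] using hj'
        exact MulChar.map_zero _
    _ = ∑ j ∈ {j : F | j ^ 4 = a}, ν a := by
        refine sum_congr rfl fun j hj => ?_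
        rw [MulChar.pow_apply' ν four_ne_zero, ← map_pow, (mem_filter_univ j).mp hj]
    _ = ν a * (quadraticChar F a + 1) := by
        rw [sum_const, nsmul_eq_mul, mul_comm, ← Int.cast_natCast,
          quadraticChar_card_fourth_roots hF]
        push_cast; ring

theorem Finset.sum_mul_sum_filter_comm {ι κ M R : Type*} [Fintype κ] [CommSemiring R]
    (s : Finset ι) (f : ι → R) (g : κ → R) (N : κ → M) (e : ι → M) :
    ∑ j ∈ s, f j * ∑ z ∈ univ.filter (fun z => N z = e j), g z =
      ∑ z, (∑ j ∈ s.filter (fun j => N z = e j), f j) * g z := by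
  simp only [mul_sum, sum_mul, sum_filter, mul_ite, ite_mul, mul_zero, zero_mul]
  exact sum_comm

theorem statement10_general
    (q : ℕ)
    (hq3 : q % 4 = 3)
    (F K : Type) [Field F] [Fintype F] [Field K] [Fintype K] [Algebra F K]
    (hF : Fintype.card F = q)
    (M₈ : MulChar K ℂ) (hM₈ : orderOf M₈ = 8)
    (D : MulChar F ℂ) (ν₁ : MulChar F ℂ) :
    ∑ j ∈ (Finset.univ : Finset F) \ {0},
        (ν₁ ^ 4) j *
          ∑ z ∈ Finset.univ.filter (fun z : K => Algebra.norm F z = j ^ 4),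
            M₈ z * D⁻¹ (Algebra.norm F (1 - z)) =
      (∑ z : K, ν₁ (Algebra.norm F z) * M₈ z * D⁻¹ (Algebra.norm F (1 - z))) +
      (∑ z : K, ν₁ (Algebra.norm F z) * (M₈ ^ 5) z * D⁻¹ (Algebra.norm F (1 - z))) := by
  have hF4 : Fintype.card F % 4 = 3 := hF ▸ hq3
  have hF2 : ringChar F ≠ 2 := ringChar_ne_two_of_card_mod_four_eq_three hF4
  have hM₈4 (z : K) : (quadraticChar K z : ℂ) = M₈ z ^ 4 := by
    rw [← MulChar.pow_apply' M₈ four_ne_zero]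
    exact (MulChar.eq_quadraticChar_of_orderOf_eq_two
      (by rw [orderOf_pow_of_dvd four_ne_zero (by rw [hM₈]; norm_num), hM₈]) z).symm
  rw [sum_mul_sum_filter_comm, ← sum_add_distrib]
  refine sum_congr rfl fun z _ => ?_
  rw [MulChar.sum_pow_four_fourth_roots hF4, quadraticChar_norm hF2, hM₈4,
    MulChar.pow_apply' M₈ (by norm_num : 5 ≠ 0)]
  ring

/-- For a nontrivial multiplicative character D on F_q (q ≡ 3 mod 4) and any
character ν₁, Σ_{j∈F_q*} ν₁⁴(j)·R(D,j) = J₂(ν₁N·M₈, D̄N) + J₂(ν₁N·M₈⁵, D̄N), where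
R(D,j) = Σ_{z∈F_{q²}, Nz=j⁴} M₈(z)·(D̄N)(1−z). -/
theorem statement10
    (p n q : ℕ) [Fact p.Prime] (hpodd : Odd p) (hn : 0 < n) (hq : q = p ^ n)
    (hq3 : q % 4 = 3)
    (F K : Type) [Field F] [Fintype F] [Field K] [Fintype K] [Algebra F K]
    (hF : Fintype.card F = q) (hK : Fintype.card K = q ^ 2)
    (φ : MulChar F ℂ) (hφ : ∀ x : F, φ x = ((quadraticChar F x : ℤ) : ℂ))
    (M₈ : MulChar K ℂ) (hM₈ : orderOf M₈ = 8)
    (D : MulChar F ℂ) (hD : D ≠ 1) (ν₁ : MulChar F ℂ) :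
    ∑ j ∈ (Finset.univ : Finset F) \ {0},
        (ν₁ ^ 4) j *
          ∑ z ∈ Finset.univ.filter (fun z : K => Algebra.norm F z = j ^ 4),
            M₈ z * D⁻¹ (Algebra.norm F (1 - z)) =
      (∑ z : K, ν₁ (Algebra.norm F z) * M₈ z * D⁻¹ (Algebra.norm F (1 - z))) +
      (∑ z : K, ν₁ (Algebra.norm F z) * (M₈ ^ 5) z * D⁻¹ (Algebra.norm F (1 - z))) :=
  statement10_general q hq3 F K hF M₈ hM₈ D ν₁
end
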